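/- (Limit ε → 0 of the regularized discrete solutions: strict upper bound.) Let n* ∈ (0,1), N ≥ 1, let w ∈ ℝᴺ have strictly positive entries, and let C ≥ 0. Let (ε_k) ⊂ (0,1/2) with ε_k → 0, and for each k let n^{(k)} ∈ ℝᴺ be a vector with n^{(k)}_i ≥ 0 for all i and Σ_i w_i·ψ₊,ε_k(n^{(k)}_i) ≤ C. If n^{(k)} converges to a vector n as k → ∞, then 0 ≤ n_i < 1 for every i. -/

import Mathlib

/-- The convex part of the single-well potential: `ψ₊(n) = −(1−n*)·log(1−n) − n³/3`. -/
noncomputable def psiPlus (ns n : ℝ) : ℝ :=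
  -(1 - ns) * Real.log (1 - n) - n ^ 3 / 3

/-- Its derivative `ψ₊'(n) = (1−n*)/(1−n) − n²`. -/
noncomputable def psiPlusD (ns n : ℝ) : ℝ := (1 - ns) / (1 - n) - n ^ 2

/-- Its second derivative `ψ₊''(n) = (1−n*)/(1−n)² − 2n`. -/
noncomputable def psiPlusDD (ns n : ℝ) : ℝ := (1 - ns) / (1 - n) ^ 2 - 2 * n

/-- The regularized convex potential `ψ₊,ε : ℝ → ℝ`, obtained by freezing the second
derivative of `ψ₊` outside `[ε, 1−ε]` (second-order Taylor extensions at `ε` and `1−ε`). -/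
noncomputable def psiPlusEps (ns ε n : ℝ) : ℝ :=
  if n ≤ ε then
    psiPlus ns ε + psiPlusD ns ε * (n - ε) + (1 / 2) * psiPlusDD ns ε * (n - ε) ^ 2
  else if n ≤ 1 - ε then psiPlus ns n
  else
    psiPlus ns (1 - ε) + psiPlusD ns (1 - ε) * (n - (1 - ε))
      + (1 / 2) * psiPlusDD ns (1 - ε) * (n - (1 - ε)) ^ 2


/-! For `ε ≤ (1 - n*)/2` the regularized potential is bounded below by `-2` on `[0, ∞)`, and by
`-(1 - n*) log δ - 1/3` on `[1 - δ, ∞)` whenever `ε ≤ δ`: there it dominates `ψ₊` at the point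
`min n (1 - ε)`, whose distance to `1` is at most `δ`. If `n_i ≥ 1`, then for every small `δ` some
`k` has `ε_k < δ` and `n^{(k)}_i > 1 - δ`, and the energy bound gives
`w_i (-(1 - n*) log δ + 5/3) ≤ C + 2 ∑ w`, which fails as `δ → 0`. -/

open Real Filter Topology Finset

lemma neg_mul_log_one_sub_sub_le_psiPlus {ns x : ℝ} (hx0 : 0 ≤ x) (hx1 : x ≤ 1) :
    -(1 - ns) * log (1 - x) - 1 / 3 ≤ psiPlus ns x := by
  have : x ^ 3 ≤ 1 := pow_le_one₀ hx0 hx1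
  unfold psiPlus
  linarith

lemma neg_third_le_psiPlus {ns x : ℝ} (hns : ns ≤ 1) (hx0 : 0 ≤ x) (hx1 : x < 1) :
    -1 / 3 ≤ psiPlus ns x := by
  have hlog : log (1 - x) ≤ 0 := log_nonpos (by linarith) (by linarith)
  have : 0 ≤ -(1 - ns) * log (1 - x) := by nlinarith
  linarith [neg_mul_log_one_sub_sub_le_psiPlus (ns := ns) hx0 hx1.le]

section Regularization

variable {ns ε : ℝ}

lemma psiPlusD_one_sub_nonneg (hε0 : 0 < ε) (hε1 : ε ≤ 1) (hεns : ε ≤ (1 - ns) / 2) :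
    0 ≤ psiPlusD ns (1 - ε) := by
  have : 2 ≤ (1 - ns) / ε := by rw [le_div_iff₀ hε0]; linarith
  unfold psiPlusD
  rw [sub_sub_cancel]
  nlinarith

lemma psiPlusDD_one_sub_nonneg (hε0 : 0 < ε) (hε1 : ε ≤ 1) (hεns : ε ≤ (1 - ns) / 2) :
    0 ≤ psiPlusDD ns (1 - ε) := by
  have : 2 ≤ (1 - ns) / ε ^ 2 := by rw [le_div_iff₀ (by positivity)]; nlinarith
  unfold psiPlusDD
  rw [sub_sub_cancel]
  linarith

lemma psiPlusDD_nonneg (hε0 : 0 ≤ ε) (hε1 : ε < 1) (hεns : ε ≤ (1 - ns) / 2) :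
    0 ≤ psiPlusDD ns ε := by
  have : 2 * ε ≤ (1 - ns) / (1 - ε) ^ 2 := by
    have : (1 - ε) ^ 2 ≤ 1 := by nlinarith
    rw [le_div_iff₀ (by nlinarith)]
    nlinarith [mul_le_mul_of_nonneg_left this hε0]
  unfold psiPlusDD
  linarith

lemma psiPlus_min_le_psiPlusEps (hε0 : 0 < ε) (hε1 : ε ≤ 1) (hεns : ε ≤ (1 - ns) / 2) {x : ℝ}
    (hεx : ε < x) : psiPlus ns (min x (1 - ε)) ≤ psiPlusEps ns ε x := by
  unfold psiPlusEps
  rw [if_neg hεx.not_ge]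
  split_ifs with hx
  · rw [min_eq_left hx]
  · have ht : 0 ≤ x - (1 - ε) := by linarith
    rw [min_eq_right (by linarith)]
    have := psiPlusD_one_sub_nonneg hε0 hε1 hεns
    have := psiPlusDD_one_sub_nonneg hε0 hε1 hεns
    have : 0 ≤ psiPlusDD ns (1 - ε) * (x - (1 - ε)) ^ 2 := by positivity
    nlinarith

lemma neg_two_le_psiPlusEps_of_le (hns : 0 ≤ ns) (hε0 : 0 < ε) (hεns : ε ≤ (1 - ns) / 2) {x : ℝ}
    (hx0 : 0 ≤ x) (hxε : x ≤ ε) : -2 ≤ psiPlusEps ns ε x := by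
  have hψ := neg_third_le_psiPlus (ns := ns) (by linarith) hε0.le (by linarith)
  have hD : psiPlusD ns ε ≤ 2 := by
    have : (1 - ns) / (1 - ε) ≤ 2 := by rw [div_le_iff₀ (by linarith)]; linarith
    unfold psiPlusD
    nlinarith
  have : 0 ≤ psiPlusDD ns ε * (x - ε) ^ 2 := by
    have := psiPlusDD_nonneg hε0.le (by linarith) hεns
    positivity
  unfold psiPlusEps
  rw [if_pos hxε]
  nlinarith [mul_le_mul_of_nonneg_right hD (sub_nonneg.2 hxε)]

lemma neg_two_le_psiPlusEps (hns : 0 ≤ ns) (hε0 : 0 < ε) (hεns : ε ≤ (1 - ns) / 2) {x : ℝ}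
    (hx : 0 ≤ x) : -2 ≤ psiPlusEps ns ε x := by
  rcases le_or_gt x ε with hxε | hεx
  · exact neg_two_le_psiPlusEps_of_le hns hε0 hεns hx hxε
  · have := psiPlus_min_le_psiPlusEps hε0 (by linarith) hεns hεx
    have := neg_third_le_psiPlus (ns := ns) (x := min x (1 - ε)) (by linarith)
      (le_min hx (by linarith)) (min_lt_of_right_lt (by linarith))
    linarith

lemma neg_mul_log_sub_le_psiPlusEps {δ : ℝ} (hε0 : 0 < ε) (hεδ : ε ≤ δ) (hδ1 : δ < 1 / 2)
    (hδns : δ ≤ (1 - ns) / 2) {x : ℝ} (hx : 1 - δ ≤ x) :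
    -(1 - ns) * log δ - 1 / 3 ≤ psiPlusEps ns ε x := by
  set m := min x (1 - ε)
  have hm : ε ≤ 1 - m ∧ 1 - m ≤ δ :=
    ⟨by linarith [min_le_right x (1 - ε)], by linarith [le_min hx (by linarith : 1 - δ ≤ 1 - ε)]⟩
  have hlog : log (1 - m) ≤ log δ := log_le_log (by linarith) hm.2
  calc -(1 - ns) * log δ - 1 / 3 ≤ -(1 - ns) * log (1 - m) - 1 / 3 := by nlinarith
    _ ≤ psiPlus ns m := neg_mul_log_one_sub_sub_le_psiPlus (by linarith) (by linarith)
    _ ≤ psiPlusEps ns ε x :=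
      psiPlus_min_le_psiPlusEps hε0 (by linarith) (by linarith) (by linarith)

end Regularization

lemma le_sum_mul_psiPlusEps {ι : Type*} [Fintype ι] {ns ε δ : ℝ} {w x : ι → ℝ}
    (hns : 0 ≤ ns) (hw : ∀ j, 0 ≤ w j) (hx : ∀ j, 0 ≤ x j) (hε0 : 0 < ε) (hεδ : ε ≤ δ)
    (hδ1 : δ < 1 / 2) (hδns : δ ≤ (1 - ns) / 2) {i : ι} (hxi : 1 - δ ≤ x i) :
    w i * (-(1 - ns) * log δ + 5 / 3) ≤ ∑ j, w j * psiPlusEps ns ε (x j) + 2 * ∑ j, w j := by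
  have hεns : ε ≤ (1 - ns) / 2 := by linarith
  calc w i * (-(1 - ns) * log δ + 5 / 3) ≤ w i * (psiPlusEps ns ε (x i) + 2) :=
        mul_le_mul_of_nonneg_left
          (by linarith [neg_mul_log_sub_le_psiPlusEps hε0 hεδ hδ1 hδns hxi]) (hw i)
    _ ≤ ∑ j, w j * (psiPlusEps ns ε (x j) + 2) :=
        single_le_sum (f := fun j => w j * (psiPlusEps ns ε (x j) + 2))
          (fun j _ => mul_nonneg (hw j) (by linarith [neg_two_le_psiPlusEps hns hε0 hεns (hx j)]))
          (mem_univ i)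
    _ = ∑ j, w j * psiPlusEps ns ε (x j) + 2 * ∑ j, w j := by
        simp only [mul_add, sum_add_distrib, ← sum_mul, mul_comm]

theorem stmt13_general (ns : ℝ) (hns : ns ∈ Set.Ioo (0 : ℝ) 1)
    (N : ℕ)
    (w : Fin N → ℝ) (hw : ∀ i, 0 < w i) (C : ℝ)
    (ε : ℕ → ℝ) (hε : ∀ k, ε k ∈ Set.Ioo (0 : ℝ) (1 / 2))
    (hε0 : Filter.Tendsto ε Filter.atTop (nhds 0))
    (nseq : ℕ → Fin N → ℝ) (hpos : ∀ k i, 0 ≤ nseq k i)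
    (hbound : ∀ k, ∑ i, w i * psiPlusEps ns (ε k) (nseq k i) ≤ C)
    (n : Fin N → ℝ) (hconv : Filter.Tendsto nseq Filter.atTop (nhds n)) :
    ∀ i, 0 ≤ n i ∧ n i < 1 := by
  intro i
  have hci : Tendsto (fun k => nseq k i) atTop (𝓝 (n i)) := tendsto_pi_nhds.1 hconv i
  refine ⟨ge_of_tendsto' hci (hpos · i), ?_⟩
  by_contra! hni
  have hbounded : ∀ δ ∈ Set.Ioo 0 ((1 - ns) / 2),
      w i * (-(1 - ns) * log δ + 5 / 3) ≤ C + 2 * ∑ j, w j := by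
    rintro δ ⟨hδ0, hδ⟩
    obtain ⟨k, hεk, hnk⟩ := ((hε0.eventually (gt_mem_nhds hδ0)).and
      (hci.eventually (lt_mem_nhds (by linarith : n i - δ < n i)))).exists
    have := le_sum_mul_psiPlusEps hns.1.le (fun j => (hw j).le) (hpos k) (hε k).1 hεk.le
      (by linarith [hns.1]) hδ.le (i := i) (by linarith)
    linarith [hbound k]
  have hblowup : Tendsto (fun δ => w i * (-(1 - ns) * log δ + 5 / 3)) (𝓝[>] 0) atTop :=
    (tendsto_atTop_add_const_right _ _ (tendsto_log_nhdsGT_zero.const_mul_atBot_of_neg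
      (by linarith [hns.2]))).const_mul_atTop (hw i)
  obtain ⟨δ, hδbig, hδ⟩ := ((hblowup.eventually_gt_atTop (C + 2 * ∑ j, w j)).and
    (Ioo_mem_nhdsGT (by linarith [hns.2] : (0 : ℝ) < (1 - ns) / 2))).exists
  linarith [hbounded δ hδ]

theorem stmt13 (ns : ℝ) (hns : ns ∈ Set.Ioo (0 : ℝ) 1)
    (N : ℕ) (hN : 1 ≤ N)
    (w : Fin N → ℝ) (hw : ∀ i, 0 < w i) (C : ℝ) (hC : 0 ≤ C)
    (ε : ℕ → ℝ) (hε : ∀ k, ε k ∈ Set.Ioo (0 : ℝ) (1 / 2))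
    (hε0 : Filter.Tendsto ε Filter.atTop (nhds 0))
    (nseq : ℕ → Fin N → ℝ) (hpos : ∀ k i, 0 ≤ nseq k i)
    (hbound : ∀ k, ∑ i, w i * psiPlusEps ns (ε k) (nseq k i) ≤ C)
    (n : Fin N → ℝ) (hconv : Filter.Tendsto nseq Filter.atTop (nhds n)) :
    ∀ i, 0 ≤ n i ∧ n i < 1 :=
  stmt13_general ns hns N w hw C ε hε hε0 nseq hpos hbound n hconv
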